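/- For any invertible α ∈ M_ℓ(ℂ) and positive semidefinite ℓ×ℓ complex matrices X and Y, tgm(α*·X·α, α⁻¹·Y·(α⁻¹)*) = tgm(X,Y). -/

import Mathlib

/-!
`tgm X Y` is the sum of the square roots of the eigenvalues of `√X Y √X`, and these are the
eigenvalues of `Y X` since `charpoly (AB) = charpoly (BA)`. The congruence turns `Y X` into
`α⁻¹ (Y X) α`, a similar matrix, so the characteristic polynomial and hence `tgm` are unchanged.
-/

open Matrix
open scoped ComplexOrder

/-- The square root of a positive semidefinite matrix (the definition of the older Mathlib's
`Matrix.PosSemidef.sqrt`, removed since). -/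
noncomputable def Matrix.PosSemidef.sqrt {n : Type*} [Fintype n] [DecidableEq n]
    {A : Matrix n n ℂ} (hA : A.PosSemidef) : Matrix n n ℂ :=
  hA.1.eigenvectorUnitary.1 * diagonal ((↑) ∘ (√·) ∘ hA.1.eigenvalues) *
    (star hA.1.eigenvectorUnitary : Matrix n n ℂ)

theorem Matrix.PosSemidef.posSemidef_sqrt {n : Type*} [Fintype n] [DecidableEq n]
    {A : Matrix n n ℂ} (hA : A.PosSemidef) : hA.sqrt.PosSemidef := by
  have hD : (diagonal ((↑) ∘ (√·) ∘ hA.1.eigenvalues : n → ℂ)).PosSemidef := by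
    rw [posSemidef_diagonal_iff]
    intro i
    simp only [Function.comp_apply, Complex.zero_le_real]
    exact Real.sqrt_nonneg _
  have h := hD.mul_mul_conjTranspose_same (hA.1.eigenvectorUnitary : Matrix n n ℂ)
  unfold Matrix.PosSemidef.sqrt
  convert h using 1
  first
  | rfl
  | rw [star_eq_conjTranspose]

/-- The product `√X * Y * √X` is positive semidefinite. -/
theorem sqrt_mul_mul_sqrt_posSemidef {n : Type*} [Fintype n] [DecidableEq n]
    {X Y : Matrix n n ℂ} (hX : X.PosSemidef) (hY : Y.PosSemidef) :
    (hX.sqrt * Y * hX.sqrt).PosSemidef := by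
  have h := hY.conjTranspose_mul_mul_same (B := hX.sqrt)
  rwa [hX.posSemidef_sqrt.isHermitian.eq] at h

/-- The tracial geometric mean `tgm(X,Y) = trace √(√X·Y·√X)`. -/
noncomputable def tgm {n : Type*} [Fintype n] [DecidableEq n]
    {X Y : Matrix n n ℂ} (hX : X.PosSemidef) (hY : Y.PosSemidef) : ℝ :=
  ((sqrt_mul_mul_sqrt_posSemidef hX hY).sqrt.trace).re

namespace Matrix.PosSemidef

variable {n : Type*} [Fintype n] [DecidableEq n] {A B : Matrix n n ℂ}

lemma sqrt_mul_self (hA : A.PosSemidef) : hA.sqrt * hA.sqrt = A := by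
  have hUU := Matrix.mem_unitaryGroup_iff'.mp hA.1.eigenvectorUnitary.2
  conv_rhs => rw [hA.1.spectral_theorem, Unitary.conjStarAlgAut_apply]
  simp only [PosSemidef.sqrt, mul_assoc]
  rw [← mul_assoc (star _), hUU, one_mul, ← mul_assoc (diagonal _), diagonal_mul_diagonal]
  congr 3
  funext i
  simp [← Complex.ofReal_mul, Real.mul_self_sqrt (hA.eigenvalues_nonneg i)]

lemma trace_sqrt (hA : A.PosSemidef) :
    hA.sqrt.trace = ∑ i, (√(hA.1.eigenvalues i) : ℂ) := by
  rw [PosSemidef.sqrt, trace_mul_comm, ← mul_assoc,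
    Matrix.mem_unitaryGroup_iff'.mp hA.1.eigenvectorUnitary.2, one_mul, trace_diagonal]
  rfl

lemma trace_sqrt_eq_of_charpoly_eq (hA : A.PosSemidef) (hB : B.PosSemidef)
    (h : A.charpoly = B.charpoly) : hA.sqrt.trace = hB.sqrt.trace := by
  rw [trace_sqrt, trace_sqrt, (hA.1.eigenvalues_eq_eigenvalues_iff hB.1).mpr h]

end Matrix.PosSemidef

lemma Matrix.charpoly_mul_sqrt_mul_sqrt {n : Type*} [Fintype n] [DecidableEq n]
    {X : Matrix n n ℂ} (hX : X.PosSemidef) (Y : Matrix n n ℂ) :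
    (hX.sqrt * Y * hX.sqrt).charpoly = (Y * X).charpoly := by
  rw [mul_assoc, charpoly_mul_comm, mul_assoc, hX.sqrt_mul_self]

lemma Matrix.charpoly_mul_congr_conjTranspose {n R : Type*} [Fintype n] [DecidableEq n]
    [CommRing R] [StarRing R] {α : Matrix n n R} (hα : IsUnit α) (X Y : Matrix n n R) :
    ((α⁻¹ * Y * α⁻¹ᴴ) * (αᴴ * X * α)).charpoly = (Y * X).charpoly := by
  have hαα : α * α⁻¹ = 1 := mul_nonsing_inv α ((isUnit_iff_isUnit_det α).mp hα)
  have hαα' : α⁻¹ᴴ * αᴴ = 1 := by rw [← conjTranspose_mul, hαα, conjTranspose_one]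
  calc ((α⁻¹ * Y * α⁻¹ᴴ) * (αᴴ * X * α)).charpoly
      = (α⁻¹ * (Y * X * α)).charpoly := by
        simp only [mul_assoc]
        rw [← mul_assoc α⁻¹ᴴ, hαα', one_mul]
    _ = (Y * X).charpoly := by rw [charpoly_mul_comm, mul_assoc, hαα, mul_one]

lemma tgm_eq_of_charpoly_eq {n : Type*} [Fintype n] [DecidableEq n]
    {X Y X' Y' : Matrix n n ℂ} (hX : X.PosSemidef) (hY : Y.PosSemidef)
    (hX' : X'.PosSemidef) (hY' : Y'.PosSemidef) (h : (Y * X).charpoly = (Y' * X').charpoly) :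
    tgm hX hY = tgm hX' hY' :=
  congrArg Complex.re <| PosSemidef.trace_sqrt_eq_of_charpoly_eq _ _ <| by
    rw [charpoly_mul_sqrt_mul_sqrt, charpoly_mul_sqrt_mul_sqrt, h]

/-- For invertible `α`, `tgm(α*·X·α, α⁻¹·Y·(α⁻¹)*) = tgm(X,Y)`. -/
theorem tgm_congr_invertible {ℓ : ℕ} {X Y : Matrix (Fin ℓ) (Fin ℓ) ℂ}
    (hX : X.PosSemidef) (hY : Y.PosSemidef)
    {α : Matrix (Fin ℓ) (Fin ℓ) ℂ} (hα : IsUnit α) :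
    tgm (hX.conjTranspose_mul_mul_same α) (hY.mul_mul_conjTranspose_same α⁻¹) = tgm hX hY :=
  tgm_eq_of_charpoly_eq _ _ _ _ (charpoly_mul_congr_conjTranspose hα X Y)
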